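/- arXiv:1209.0392 — 9 statements merged into one kernel-verified Lean document; each statement's English description precedes it below -/
import Mathlib

section
/- For positive reals a₁, a₂, b₁, b₂ and any real p < 0, one has ((a₁^p + a₂^p)/(b₁^p + b₂^p))^(1/p) < a₁/b₁ + a₂/b₂. -/
theorem stmt_1 (a₁ a₂ b₁ b₂ p : ℝ) (ha₁ : 0 < a₁) (ha₂ : 0 < a₂)
    (hb₁ : 0 < b₁) (hb₂ : 0 < b₂) (hp : p < 0) :
    ((a₁ ^ p + a₂ ^ p) / (b₁ ^ p + b₂ ^ p)) ^ (1 / p) < a₁ / b₁ + a₂ / b₂ := by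
  set r₁ := a₁ / b₁ with hr₁
  set r₂ := a₂ / b₂ with hr₂
  have hr₁0 : 0 < r₁ := div_pos ha₁ hb₁
  have hr₂0 : 0 < r₂ := div_pos ha₂ hb₂
  set M := max r₁ r₂ with hM
  have hM0 : 0 < M := lt_max_of_lt_left hr₁0
  have hb₁p : 0 < b₁ ^ p := Real.rpow_pos_of_pos hb₁ p
  have hb₂p : 0 < b₂ ^ p := Real.rpow_pos_of_pos hb₂ p
  -- a₁ ^ p = r₁ ^ p * b₁ ^ p
  have ha₁p : a₁ ^ p = r₁ ^ p * b₁ ^ p := by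
    rw [hr₁, Real.div_rpow ha₁.le hb₁.le, div_mul_cancel₀]
    exact hb₁p.ne'
  have ha₂p : a₂ ^ p = r₂ ^ p * b₂ ^ p := by
    rw [hr₂, Real.div_rpow ha₂.le hb₂.le, div_mul_cancel₀]
    exact hb₂p.ne'
  have h1 : M ^ p ≤ r₁ ^ p := Real.rpow_le_rpow_of_nonpos hr₁0 (le_max_left _ _) hp.le
  have h2 : M ^ p ≤ r₂ ^ p := Real.rpow_le_rpow_of_nonpos hr₂0 (le_max_right _ _) hp.le
  have hkey : M ^ p ≤ (a₁ ^ p + a₂ ^ p) / (b₁ ^ p + b₂ ^ p) := by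
    rw [le_div_iff₀ (by positivity), ha₁p, ha₂p, mul_add]
    gcongr
  have hLle : ((a₁ ^ p + a₂ ^ p) / (b₁ ^ p + b₂ ^ p)) ^ (1 / p) ≤ (M ^ p) ^ (1 / p) := by
    apply Real.rpow_le_rpow_of_nonpos (Real.rpow_pos_of_pos hM0 p) hkey
    exact le_of_lt (by simpa using one_div_neg.mpr hp)
  have hMp : (M ^ p) ^ (1 / p) = M := by
    rw [← Real.rpow_mul hM0.le, mul_one_div_cancel hp.ne, Real.rpow_one]
  calc ((a₁ ^ p + a₂ ^ p) / (b₁ ^ p + b₂ ^ p)) ^ (1 / p) ≤ M := hMp ▸ hLle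
    _ < r₁ + r₂ := max_lt (lt_add_of_pos_right _ hr₂0) (lt_add_of_pos_left _ hr₁0)
end

section
/- Let 0 < β < α ≤ 1 and 0 < p ≤ 1. Then ((α^p + 1)/(β^p + 1))^(1/p) < α/β + 1. -/
theorem stmt_3 (α β p : ℝ) (hβ : 0 < β) (hβα : β < α) (hα1 : α ≤ 1)
    (hp : 0 < p) (hp1 : p ≤ 1) :
    ((α ^ p + 1) / (β ^ p + 1)) ^ (1 / p) < α / β + 1 := by
  have hα : (0:ℝ) < α := hβ.trans hβα
  have hr : (1:ℝ) < α / β + 1 := by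
    have : 0 < α / β := div_pos hα hβ
    linarith
  have hbp : (0:ℝ) < β ^ p := Real.rpow_pos_of_pos hβ p
  have hap : (0:ℝ) < α ^ p := Real.rpow_pos_of_pos hα p
  have hbp1 : (0:ℝ) < β ^ p + 1 := by linarith
  -- key: α^p + 1 < (α/β+1)^p * (β^p + 1)
  have h1 : α ^ p < (α + β) ^ p := Real.rpow_lt_rpow hα.le (by linarith) hp
  have h2 : (1:ℝ) < (α / β + 1) ^ p :=
    Real.one_lt_rpow_iff_of_pos (by linarith) |>.mpr (Or.inl ⟨hr, hp⟩)
  have h3 : (α + β) ^ p = (α / β + 1) ^ p * β ^ p := by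
    rw [← Real.mul_rpow (by positivity) hβ.le]
    congr 1
    field_simp
  have hkey : α ^ p + 1 < (α / β + 1) ^ p * (β ^ p + 1) := by
    rw [mul_add, mul_one, ← h3]
    linarith
  have hdiv : (α ^ p + 1) / (β ^ p + 1) < (α / β + 1) ^ p :=
    (div_lt_iff₀ hbp1).mpr hkey
  have hfinal := Real.rpow_lt_rpow (by positivity) hdiv (by positivity : (0:ℝ) < 1 / p)
  calc ((α ^ p + 1) / (β ^ p + 1)) ^ (1 / p)
      < ((α / β + 1) ^ p) ^ (1 / p) := hfinal
    _ = α / β + 1 := by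
        rw [← Real.rpow_mul (by linarith)]
        rw [mul_one_div, div_self hp.ne', Real.rpow_one]
end

section
/- Let 0 < β < α ≤ 1 and q ≥ 1. Then α^(1/q) + 1 < (α + β)^(1/q) + (α/β + 1)^(1/q). -/
theorem stmt_4 (α β q : ℝ) (hβ : 0 < β) (hβα : β < α) (hα1 : α ≤ 1) (hq : 1 ≤ q) :
    α ^ (1 / q) + 1 < (α + β) ^ (1 / q) + (α / β + 1) ^ (1 / q) := by
  have hα : 0 < α := hβ.trans hβα
  have hqpos : 0 < 1 / q := by positivity
  have h1 : α ^ (1 / q) < (α + β) ^ (1 / q) :=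
    Real.rpow_lt_rpow hα.le (by linarith) hqpos
  have h2 : 1 < (α / β + 1) ^ (1 / q) := by
    rw [Real.one_lt_rpow_iff_of_pos (by positivity)]
    left
    constructor
    · nlinarith [div_pos hα hβ]
    · exact hqpos
  linarith
end

section
/- Let n ≥ 2 be a natural number, let a, b : Fin n → ℝ with a k > 0 and b k > 0 for all k, and let p be a nonzero real number. Then ((∑ k, (a k)^p)/(∑ k, (b k)^p))^(1/p) < ∑ k, (a k)/(b k). -/
theorem stmt_6 (n : ℕ) (hn : 2 ≤ n) (a b : Fin n → ℝ)
    (ha : ∀ k, 0 < a k) (hb : ∀ k, 0 < b k) (p : ℝ) (hp : p ≠ 0) :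
    ((∑ k, (a k) ^ p) / (∑ k, (b k) ^ p)) ^ (1 / p) < ∑ k, a k / b k := by
  have hne : (Finset.univ : Finset (Fin n)).Nonempty := by
    refine Finset.univ_nonempty_iff.mpr ?_
    exact Fin.pos_iff_nonempty.mp (by omega)
  obtain ⟨m, -, hm⟩ := Finset.exists_max_image Finset.univ (fun k => a k / b k) hne
  set c : Fin n → ℝ := fun k => a k / b k with hc
  have hcpos : ∀ k, 0 < c k := fun k => div_pos (ha k) (hb k)
  have hak : ∀ k, a k = c k * b k := fun k => (div_mul_cancel₀ _ (hb k).ne').symm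
  have hbpos : 0 < ∑ k, (b k) ^ p :=
    Finset.sum_pos (fun k _ => Real.rpow_pos_of_pos (hb k) p) hne
  have hapos : 0 < ∑ k, (a k) ^ p :=
    Finset.sum_pos (fun k _ => Real.rpow_pos_of_pos (ha k) p) hne
  have key : ((∑ k, (a k) ^ p) / (∑ k, (b k) ^ p)) ^ (1 / p) ≤ c m := by
    rcases lt_or_gt_of_ne hp with hneg | hpos
    · -- p < 0 : each (c k)^p ≥ (c m)^p, so ratio ≥ (c m)^p, and x^(1/p) antitone
      have hsum : (c m) ^ p * ∑ k, (b k) ^ p ≤ ∑ k, (a k) ^ p := by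
        rw [Finset.mul_sum]
        refine Finset.sum_le_sum fun k _ => ?_
        rw [hak k, Real.mul_rpow (hcpos k).le (hb k).le]
        exact mul_le_mul_of_nonneg_right
          (Real.rpow_le_rpow_of_nonpos (hcpos k) (hm k (Finset.mem_univ k)) hneg.le)
          (Real.rpow_pos_of_pos (hb k) p).le
      have hratio : (c m) ^ p ≤ (∑ k, (a k) ^ p) / (∑ k, (b k) ^ p) :=
        (le_div_iff₀ hbpos).mpr hsum
      have := Real.rpow_le_rpow_of_nonpos (Real.rpow_pos_of_pos (hcpos m) p) hratio
        (div_neg_of_pos_of_neg one_pos hneg).le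
      calc ((∑ k, (a k) ^ p) / (∑ k, (b k) ^ p)) ^ (1 / p)
          ≤ ((c m) ^ p) ^ (1/p) := this
        _ = c m := by
            rw [← Real.rpow_mul (hcpos m).le]
            simp [mul_one_div, div_self hp, mul_inv_cancel₀ hp]
    · -- p > 0
      have hsum : ∑ k, (a k) ^ p ≤ (c m) ^ p * ∑ k, (b k) ^ p := by
        rw [Finset.mul_sum]
        refine Finset.sum_le_sum fun k _ => ?_
        rw [hak k, Real.mul_rpow (hcpos k).le (hb k).le]
        exact mul_le_mul_of_nonneg_right
          (Real.rpow_le_rpow (hcpos k).le (hm k (Finset.mem_univ k)) hpos.le)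
          (Real.rpow_pos_of_pos (hb k) p).le
      have hratio : (∑ k, (a k) ^ p) / (∑ k, (b k) ^ p) ≤ (c m) ^ p :=
        (div_le_iff₀ hbpos).mpr hsum
      calc ((∑ k, (a k) ^ p) / (∑ k, (b k) ^ p)) ^ (1 / p)
          ≤ ((c m) ^ p) ^ (1/p) :=
            Real.rpow_le_rpow (by positivity) hratio (by positivity)
        _ = c m := by
            rw [← Real.rpow_mul (hcpos m).le]
            simp [mul_one_div, div_self hp, mul_inv_cancel₀ hp]
  have hstrict : c m < ∑ k, c k := by
    obtain ⟨j, hj⟩ : ∃ j : Fin n, j ≠ m :=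
      Fintype.exists_ne_of_one_lt_card (by simp; omega) m
    exact Finset.single_lt_sum hj (Finset.mem_univ m) (Finset.mem_univ j) (hcpos j)
      fun k _ _ => (hcpos k).le
  exact lt_of_le_of_lt key hstrict
end

section
/- Let a, b : ℕ → ℝ be sequences of strictly positive reals and p a nonzero real. If the series ∑ (a k)/(b k) and ∑ (b k)^p converge (for p > 0; appropriate summability hypotheses), then ∑' k, (a k)^p ≤ (∑' k, (b k)^p) · (∑' k, (a k)/(b k))^p. -/
theorem stmt_8 (a b : ℕ → ℝ) (ha : ∀ k, 0 < a k) (hb : ∀ k, 0 < b k)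
    (p : ℝ) (hp : 0 < p)
    (hsb : Summable (fun k => (b k) ^ p))
    (hsq : Summable (fun k => a k / b k)) :
    ∑' k, (a k) ^ p ≤ (∑' k, (b k) ^ p) * (∑' k, a k / b k) ^ p := by
  set S := ∑' k, a k / b k with hS
  have hSnn : 0 ≤ S ^ p := Real.rpow_nonneg (tsum_nonneg fun k => le_of_lt (div_pos (ha k) (hb k))) p
  have key : ∀ k, a k ^ p ≤ b k ^ p * S ^ p := by
    intro k
    have h1 : b k * (a k / b k) = a k := mul_div_cancel₀ (a k) (hb k).ne'
    calc a k ^ p = (b k * (a k / b k)) ^ p := by rw [h1]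
      _ = b k ^ p * (a k / b k) ^ p :=
          Real.mul_rpow (hb k).le (div_pos (ha k) (hb k)).le
      _ ≤ b k ^ p * S ^ p := by
          apply mul_le_mul_of_nonneg_left _ (Real.rpow_nonneg (hb k).le p)
          exact Real.rpow_le_rpow (div_pos (ha k) (hb k)).le
            (Summable.le_tsum hsq k fun j _ => (div_pos (ha j) (hb j)).le) hp.le
  have hs2 : Summable (fun k => b k ^ p * S ^ p) := hsb.mul_right _
  have hsa : Summable (fun k => a k ^ p) :=
    Summable.of_nonneg_of_le (fun k => Real.rpow_nonneg (ha k).le p) key hs2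
  calc ∑' k, a k ^ p ≤ ∑' k, b k ^ p * S ^ p := Summable.tsum_le_tsum key hsa hs2
    _ = (∑' k, b k ^ p) * S ^ p := tsum_mul_right
end

section
/- Let a, b : Fin n → ℝ be strictly positive tuples (n ≥ 1). Then the quotient p ↦ (∑ k, (a k)^p)^(1/p) / (∑ k, (b k)^p)^(1/p) tends to (∏ k, (a k)/(b k))^(1/n) as p → 0 (over nonzero p). -/
/-! The ratio is unchanged when both sums are weighted by `1 / n`, so it is the quotient of the
power means `M_p(a) / M_p(b)`. For weights summing to one, `log M_p(c)` is the difference quotient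
at `0` of `p ↦ log (∑ w_k c_k ^ p)`, which vanishes at `0`; its derivative there is
`∑ w_k log c_k`, hence `M_p(c)` tends to the weighted geometric mean `∏ c_k ^ w_k`. -/

open Filter Real Finset Topology

variable {ι : Type*} [Fintype ι] {w c : ι → ℝ}

theorem sum_const_mul_rpow_rpow {r : ℝ} (hr : 0 ≤ r) (hc : ∀ k, 0 ≤ c k) (p q : ℝ) :
    (∑ k, r * c k ^ p) ^ q = r ^ q * (∑ k, c k ^ p) ^ q := by
  rw [← mul_sum, mul_rpow hr (sum_nonneg fun k _ => rpow_nonneg (hc k) p)]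

theorem sum_mul_rpow_pos (hw : ∀ k, 0 ≤ w k) (hw1 : ∑ k, w k = 1) (hc : ∀ k, 0 < c k)
    (p : ℝ) : 0 < ∑ k, w k * c k ^ p := by
  obtain ⟨k, -, hk⟩ : ∃ k ∈ univ, (0 : ι → ℝ) k < w k :=
    exists_lt_of_sum_lt (by simp [hw1])
  exact sum_pos' (fun k _ => mul_nonneg (hw k) (rpow_pos_of_pos (hc k) p).le)
    ⟨k, mem_univ k, mul_pos hk (rpow_pos_of_pos (hc k) p)⟩

theorem hasDerivAt_log_sum_mul_rpow (hw1 : ∑ k, w k = 1) (hc : ∀ k, 0 < c k) :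
    HasDerivAt (fun p : ℝ => log (∑ k, w k * c k ^ p)) (∑ k, w k * log (c k)) 0 := by
  have hsum : HasDerivAt (fun p : ℝ => ∑ k, w k * c k ^ p)
      (∑ k, w k * (c k ^ (0 : ℝ) * log (c k))) 0 :=
    .fun_sum fun k _ => (hasStrictDerivAt_const_rpow (hc k) 0).hasDerivAt.const_mul (w k)
  convert hsum.log (by simp [hw1]) using 1
  simp [hw1]

theorem tendsto_sum_mul_rpow_rpow_inv_nhdsNE_zero (hw : ∀ k, 0 ≤ w k) (hw1 : ∑ k, w k = 1)
    (hc : ∀ k, 0 < c k) :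
    Tendsto (fun p : ℝ => (∑ k, w k * c k ^ p) ^ (1 / p)) (𝓝[≠] 0) (𝓝 (∏ k, c k ^ w k)) := by
  have hslope := (hasDerivAt_iff_tendsto_slope.mp (hasDerivAt_log_sum_mul_rpow hw1 hc))
  have hlim : exp (∑ k, w k * log (c k)) = ∏ k, c k ^ w k := by
    rw [exp_sum]
    refine prod_congr rfl fun k _ => ?_
    rw [rpow_def_of_pos (hc k), mul_comm]
  rw [← hlim]
  refine ((continuous_exp.tendsto _).comp hslope).congr fun p => ?_
  simp only [Function.comp_apply, slope_def_field, rpow_zero, mul_one, hw1, log_one, sub_zero]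
  rw [rpow_def_of_pos (sum_mul_rpow_pos hw hw1 hc p)]
  ring_nf

theorem stmt_14 (n : ℕ) (hn : 1 ≤ n) (a b : Fin n → ℝ)
    (ha : ∀ k, 0 < a k) (hb : ∀ k, 0 < b k) :
    Filter.Tendsto
      (fun p : ℝ => (∑ k, (a k) ^ p) ^ (1 / p) / (∑ k, (b k) ^ p) ^ (1 / p))
      (nhdsWithin 0 {0}ᶜ)
      (nhds ((∏ k, a k / b k) ^ ((1 : ℝ) / n))) := by
  have hn' : (0 : ℝ) < n := by exact_mod_cast hn
  set w : Fin n → ℝ := fun _ => 1 / n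
  have hw0 : (0 : ℝ) ≤ 1 / n := by positivity
  have hw : ∀ k, 0 ≤ w k := fun _ => hw0
  have hw1 : ∑ k, w k = 1 := by simp [w, hn'.ne']
  have hlim := (tendsto_sum_mul_rpow_rpow_inv_nhdsNE_zero hw hw1 ha).div
    (tendsto_sum_mul_rpow_rpow_inv_nhdsNE_zero hw hw1 hb)
    (prod_pos fun k _ => rpow_pos_of_pos (hb k) _).ne'
  have hval : (∏ k, a k ^ w k) / ∏ k, b k ^ w k = (∏ k, a k / b k) ^ ((1 : ℝ) / n) := by
    rw [← prod_div_distrib, ← finsetProd_rpow _ _ fun k _ => (div_pos (ha k) (hb k)).le]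
    exact prod_congr rfl fun k _ => (div_rpow (ha k).le (hb k).le _).symm
  rw [← hval]
  refine hlim.congr fun p => ?_
  simp only [Pi.div_apply, w]
  rw [sum_const_mul_rpow_rpow hw0 (fun k => (ha k).le),
    sum_const_mul_rpow_rpow hw0 (fun k => (hb k).le), mul_div_mul_left _ _ (by positivity)]
end

section
/- Fix n ≥ 2 and p > 0. For each natural K, let a k = 10^(-2K) and b k = 10^(-K) for k < n-1, and a (n-1) = b (n-1) = 1. Then as K → ∞, both ((∑ k, (a k)^p)/(∑ k, (b k)^p))^(1/p) and ∑ k, (a k)/(b k) = (n-1)·10^(-K) + 1 tend to 1. -/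
/-! Every sum in the statement has the shape `(n - 1) * ε K + 1` with `ε K → 0`: the first `n - 1`
terms are powers `10 ^ (-c K)` with `c > 0` and the last term is `1`. -/

open Filter Topology

lemma Fin.sum_ite_lt_pred {R : Type*} [Ring R] {n : ℕ} (hn : 1 ≤ n) (c d : R) :
    ∑ k : Fin n, (if (k : ℕ) < n - 1 then c else d) = (n - 1 : R) * c + d := by
  obtain ⟨m, rfl⟩ := Nat.exists_eq_add_of_le' hn
  simp [Fin.sum_univ_castSucc]

lemma tendsto_sum_ite_lt_pred {n : ℕ} (hn : 1 ≤ n) {ε : ℕ → ℝ} (hε : Tendsto ε atTop (𝓝 0)) :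
    Tendsto (fun K => ∑ k : Fin n, if (k : ℕ) < n - 1 then ε K else 1) atTop (𝓝 1) := by
  simp only [Fin.sum_ite_lt_pred hn]
  simpa using (hε.const_mul ((n : ℝ) - 1)).add_const 1

lemma tendsto_rpow_neg_mul_natCast {b c : ℝ} (hb : 1 < b) (hc : 0 < c) :
    Tendsto (fun K : ℕ => b ^ (-(c * K))) atTop (𝓝 0) :=
  (tendsto_rpow_atBot_of_base_gt_one b hb).comp <| tendsto_neg_atTop_atBot.comp <|
    tendsto_natCast_atTop_atTop.const_mul_atTop hc

theorem stmt_16 (n : ℕ) (hn : 2 ≤ n) (p : ℝ) (hp : 0 < p)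
    (a b : ℕ → Fin n → ℝ)
    (hadef : ∀ K, ∀ k : Fin n,
      a K k = if (k : ℕ) < n - 1 then (10 : ℝ) ^ (-(2 * K : ℝ)) else 1)
    (hbdef : ∀ K, ∀ k : Fin n,
      b K k = if (k : ℕ) < n - 1 then (10 : ℝ) ^ (-(K : ℝ)) else 1) :
    Filter.Tendsto
      (fun K : ℕ => ((∑ k, (a K k) ^ p) / (∑ k, (b K k) ^ p)) ^ (1 / p))
      Filter.atTop (nhds 1) ∧
    Filter.Tendsto (fun K : ℕ => ∑ k, a K k / b K k) Filter.atTop (nhds 1) ∧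
    ∀ K : ℕ, ∑ k, a K k / b K k = (n - 1 : ℝ) * (10 : ℝ) ^ (-(K : ℝ)) + 1 := by
  have hn₁ : 1 ≤ n := by omega
  obtain rfl : a = _ := funext fun K => funext (hadef K)
  obtain rfl : b = _ := funext fun K => funext (hbdef K)
  have hquot : ∀ (K : ℕ) (k : Fin n),
      (if (k : ℕ) < n - 1 then (10 : ℝ) ^ (-(2 * K : ℝ)) else 1) /
        (if (k : ℕ) < n - 1 then (10 : ℝ) ^ (-(K : ℝ)) else 1) =
      if (k : ℕ) < n - 1 then (10 : ℝ) ^ (-(K : ℝ)) else 1 := by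
    intro K k
    split_ifs
    · rw [← Real.rpow_sub (by norm_num)]
      ring_nf
    · exact div_one 1
  have hsum : ∀ c > 0, Tendsto (fun K : ℕ => ∑ k : Fin n,
      (if (k : ℕ) < n - 1 then (10 : ℝ) ^ (-(c * K : ℝ)) else 1) ^ p) atTop (𝓝 1) := by
    intro c hc
    simp only [apply_ite (· ^ p), Real.one_rpow]
    refine tendsto_sum_ite_lt_pred hn₁ ?_
    simpa [Real.zero_rpow hp.ne'] using
      (tendsto_rpow_neg_mul_natCast (by norm_num) hc).rpow_const (Or.inr hp.le)
  refine ⟨?_, ?_, fun K => ?_⟩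
  · simpa using ((hsum 2 two_pos).div (by simpa using hsum 1 one_pos) one_ne_zero).rpow_const
      (Or.inr (by positivity))
  · simp only [hquot]
    exact tendsto_sum_ite_lt_pred hn₁ <| by
      simpa using tendsto_rpow_neg_mul_natCast (b := 10) (by norm_num) one_pos
  · simp only [hquot, Fin.sum_ite_lt_pred hn₁]
end

section
/- Fix n ≥ 2 and p > 0. For each natural K, let a k = 10^(-K) and b k = 10^(-2K) for k < n-1, and a (n-1) = b (n-1) = 1. Then as K → ∞, ((∑ k, (a k)^p)/(∑ k, (b k)^p))^(1/p) tends to 1 while ∑ k, (a k)/(b k) = (n-1)·10^K + 1 tends to +∞. -/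
/-! Both `p`-sums have the form `(n - 1) ε ^ p + 1` with `ε → 0` (`ε = 10⁻ᴷ`, resp. `10⁻²ᴷ`),
so their quotient tends to `1`, whereas every quotient `a k / b k` with `k < n - 1` equals `10ᴷ`. -/

open Filter Topology

lemma Fin.sum_eq_of_eq_ite_lt_pred {R : Type*} [CommRing R] {n : ℕ} (hn : 1 ≤ n)
    {f : Fin n → R} {c d : R} (hf : ∀ k : Fin n, f k = if (k : ℕ) < n - 1 then c else d) :
    ∑ k, f k = ((n : R) - 1) * c + d := by
  obtain ⟨m, rfl⟩ := Nat.exists_eq_add_of_le' hn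
  simp [Fin.sum_univ_castSucc, hf]

lemma tendsto_rpow_neg_nhds_zero {α : Type*} {l : Filter α} {x : ℝ} (hx : 1 < x)
    {f : α → ℝ} (hf : Tendsto f l atTop) : Tendsto (fun t ↦ x ^ (-f t)) l (𝓝 0) :=
  (tendsto_rpow_atBot_of_base_gt_one x hx).comp (tendsto_neg_atTop_atBot.comp hf)

lemma tendsto_mul_rpow_add_one {α : Type*} {l : Filter α} {u : α → ℝ}
    (hu : Tendsto u l (𝓝 0)) {p : ℝ} (hp : 0 < p) (c : ℝ) :
    Tendsto (fun t ↦ c * u t ^ p + 1) l (𝓝 1) := by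
  have := ((hu.rpow_const (Or.inr hp.le)).const_mul c).add_const 1
  rwa [Real.zero_rpow hp.ne', mul_zero, zero_add] at this

theorem stmt_17 (n : ℕ) (hn : 2 ≤ n) (p : ℝ) (hp : 0 < p)
    (a b : ℕ → Fin n → ℝ)
    (hadef : ∀ K, ∀ k : Fin n,
      a K k = if (k : ℕ) < n - 1 then (10 : ℝ) ^ (-(K : ℝ)) else 1)
    (hbdef : ∀ K, ∀ k : Fin n,
      b K k = if (k : ℕ) < n - 1 then (10 : ℝ) ^ (-(2 * K : ℝ)) else 1) :
    Filter.Tendsto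
      (fun K : ℕ => ((∑ k, (a K k) ^ p) / (∑ k, (b K k) ^ p)) ^ (1 / p))
      Filter.atTop (nhds 1) ∧
    Filter.Tendsto (fun K : ℕ => ∑ k, a K k / b K k) Filter.atTop Filter.atTop ∧
    ∀ K : ℕ, ∑ k, a K k / b K k = (n - 1 : ℝ) * (10 : ℝ) ^ (K : ℝ) + 1 := by
  have hsum_a (K : ℕ) : ∑ k, a K k ^ p = ((n : ℝ) - 1) * ((10 : ℝ) ^ (-(K : ℝ))) ^ p + 1 :=
    Fin.sum_eq_of_eq_ite_lt_pred (by omega) fun k ↦ by rw [hadef]; split_ifs <;> simp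
  have hsum_b (K : ℕ) :
      ∑ k, b K k ^ p = ((n : ℝ) - 1) * ((10 : ℝ) ^ (-(2 * K : ℝ))) ^ p + 1 :=
    Fin.sum_eq_of_eq_ite_lt_pred (by omega) fun k ↦ by rw [hbdef]; split_ifs <;> simp
  have hsum_div (K : ℕ) : ∑ k, a K k / b K k = (n - 1 : ℝ) * (10 : ℝ) ^ (K : ℝ) + 1 := by
    refine Fin.sum_eq_of_eq_ite_lt_pred (by omega) fun k ↦ ?_
    rw [hadef, hbdef]
    split_ifs
    · rw [← Real.rpow_sub (by norm_num)]; ring_nf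
    · simp
  refine ⟨?_, ?_, hsum_div⟩
  · have hu := tendsto_rpow_neg_nhds_zero (by norm_num : (1 : ℝ) < 10)
      tendsto_natCast_atTop_atTop
    have hv := tendsto_rpow_neg_nhds_zero (by norm_num : (1 : ℝ) < 10)
      (tendsto_natCast_atTop_atTop.const_mul_atTop two_pos)
    have hquot := (tendsto_mul_rpow_add_one hu hp (n - 1)).div
      (tendsto_mul_rpow_add_one hv hp (n - 1)) one_ne_zero
    rw [div_one] at hquot
    simp only [hsum_a, hsum_b]
    simpa using hquot.rpow_const (p := 1 / p) (Or.inl one_ne_zero)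
  · have hn1 : (0 : ℝ) < n - 1 := by
      have : (2 : ℝ) ≤ n := by exact_mod_cast hn
      linarith
    simp only [hsum_div]
    exact (((tendsto_rpow_atTop_of_base_gt_one 10 (by norm_num)).comp
      tendsto_natCast_atTop_atTop).const_mul_atTop hn1).atTop_add tendsto_const_nhds
end

section
/- Let n ≥ 2, let a, b : Fin n → ℝ be strictly positive tuples, and let p ≠ 0 be real. Suppose the induction hypothesis: for any two strictly positive m-tuples (2 ≤ m ≤ n) the main inequality holds. Then combining the last two entries via (a_n^p + a_{n+1}^p)^(1/p) and (b_n^p + b_{n+1}^p)^(1/p) yields: ((∑_{k<n+1} (a k)^p)/(∑_{k<n+1} (b k)^p))^(1/p) < ∑_{k<n+1} (a k)/(b k). In particular, (a_n^p + a_{n+1}^p)^(1/p) / (b_n^p + b_{n+1}^p)^(1/p) < a_n/b_n + a_{n+1}/b_{n+1}. -/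
/-!
Merging the last two entries of a tuple `x` into `(x_{n-1}^p + x_n^p)^(1/p)` leaves `∑ x_k^p`
unchanged, so the left-hand side of the inequality for the merged `n`-tuples is the one for the
original `(n+1)`-tuples. On the right-hand side only the last summand changes, and the two-term
case of the inequality says it can only grow when the merge is undone.
-/

open Finset

noncomputable def pairPowNorm (p x y : ℝ) : ℝ :=
  (x ^ p + y ^ p) ^ (1 / p)

theorem pairPowNorm_pos (p : ℝ) {x y : ℝ} (hx : 0 < x) (hy : 0 < y) : 0 < pairPowNorm p x y := by
  unfold pairPowNorm
  positivity

theorem pairPowNorm_rpow {p : ℝ} (hp : p ≠ 0) {x y : ℝ} (hx : 0 ≤ x) (hy : 0 ≤ y) :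
    pairPowNorm p x y ^ p = x ^ p + y ^ p := by
  rw [pairPowNorm, one_div, Real.rpow_inv_rpow (by positivity) hp]

section MergeLastTwo

variable {m : ℕ} {p : ℝ}

variable (p) in
noncomputable def mergeLastTwo (x : Fin (m + 2) → ℝ) : Fin (m + 1) → ℝ :=
  Fin.snoc (fun k : Fin m => x k.castSucc.castSucc)
    (pairPowNorm p (x (Fin.last m).castSucc) (x (Fin.last (m + 1))))

theorem mergeLastTwo_pos {x : Fin (m + 2) → ℝ} (hx : ∀ k, 0 < x k) (k : Fin (m + 1)) :
    0 < mergeLastTwo p x k := by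
  induction k using Fin.lastCases with
  | last => simpa [mergeLastTwo] using pairPowNorm_pos p (hx _) (hx _)
  | cast k => simpa [mergeLastTwo] using hx _

theorem sum_rpow_mergeLastTwo (hp : p ≠ 0) {x : Fin (m + 2) → ℝ} (hx : ∀ k, 0 < x k) :
    ∑ k, mergeLastTwo p x k ^ p = ∑ k, x k ^ p := by
  simp only [Fin.sum_univ_castSucc, mergeLastTwo, Fin.snoc_castSucc, Fin.snoc_last,
    pairPowNorm_rpow hp (hx _).le (hx _).le, add_assoc]

theorem sum_div_mergeLastTwo_lt {a b : Fin (m + 2) → ℝ}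
    (h : pairPowNorm p (a (Fin.last m).castSucc) (a (Fin.last (m + 1))) /
        pairPowNorm p (b (Fin.last m).castSucc) (b (Fin.last (m + 1))) <
      a (Fin.last m).castSucc / b (Fin.last m).castSucc +
        a (Fin.last (m + 1)) / b (Fin.last (m + 1))) :
    ∑ k, mergeLastTwo p a k / mergeLastTwo p b k < ∑ k, a k / b k := by
  simp only [Fin.sum_univ_castSucc (n := m), Fin.sum_univ_castSucc (n := m + 1), mergeLastTwo,
    Fin.snoc_castSucc, Fin.snoc_last, add_assoc]
  gcongr

end MergeLastTwo

theorem Fin.last_sub_one_eq_castSucc (m : ℕ) : Fin.last (m + 1) - 1 = (Fin.last m).castSucc := by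
  ext
  simp [Fin.last_sub]

theorem stmt_19 (n : ℕ) (hn : 2 ≤ n) (a b : Fin (n + 1) → ℝ)
    (ha : ∀ k, 0 < a k) (hb : ∀ k, 0 < b k) (p : ℝ) (hp : p ≠ 0)
    (IH : ∀ m : ℕ, 2 ≤ m → m ≤ n → ∀ a' b' : Fin m → ℝ,
      (∀ k, 0 < a' k) → (∀ k, 0 < b' k) →
      ((∑ k, (a' k) ^ p) / (∑ k, (b' k) ^ p)) ^ (1 / p) < ∑ k, a' k / b' k) :
    ((∑ k, (a k) ^ p) / (∑ k, (b k) ^ p)) ^ (1 / p) < ∑ k, a k / b k ∧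
      ((a (Fin.last n - 1)) ^ p + (a (Fin.last n)) ^ p) ^ (1 / p) /
          ((b (Fin.last n - 1)) ^ p + (b (Fin.last n)) ^ p) ^ (1 / p) <
        a (Fin.last n - 1) / b (Fin.last n - 1) + a (Fin.last n) / b (Fin.last n) := by
  obtain ⟨m, rfl⟩ : ∃ m, n = m + 2 := ⟨n - 2, by omega⟩
  rw [Fin.last_sub_one_eq_castSucc]
  set i := (Fin.last (m + 1)).castSucc
  set j := Fin.last (m + 2)
  have pair : pairPowNorm p (a i) (a j) / pairPowNorm p (b i) (b j) < a i / b i + a j / b j := by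
    have h := IH 2 le_rfl (by omega) ![a i, a j] ![b i, b j]
      (by simp [Fin.forall_fin_two, ha]) (by simp [Fin.forall_fin_two, hb])
    simp only [Fin.sum_univ_two, Matrix.cons_val_zero, Matrix.cons_val_one] at h
    have hb_pair : 0 < b i ^ p + b j ^ p := by have := hb i; have := hb j; positivity
    rwa [Real.div_rpow (by have := ha i; have := ha j; positivity) hb_pair.le] at h
  refine ⟨?_, pair⟩
  calc ((∑ k, a k ^ p) / ∑ k, b k ^ p) ^ (1 / p)
      = ((∑ k, mergeLastTwo p a k ^ p) / ∑ k, mergeLastTwo p b k ^ p) ^ (1 / p) := by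
        rw [sum_rpow_mergeLastTwo hp ha, sum_rpow_mergeLastTwo hp hb]
    _ < ∑ k, mergeLastTwo p a k / mergeLastTwo p b k :=
        IH (m + 2) (by omega) le_rfl _ _ (mergeLastTwo_pos ha) (mergeLastTwo_pos hb)
    _ < ∑ k, a k / b k := sum_div_mergeLastTwo_lt pair
end
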